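/- For a Y-logic (X, ⊨, ⊢), letting X^⊢ = {x ∈ X | x satisfies every sequent in ⊢}, the restricted classification (X^⊢, ⊨) together with the inclusion X^⊢ ↪ X and the restricted state description τ : X^⊢ → ℘Y^⊢ forms a binary coproduct (in the fiber category of Y-classifications with Y-fiber infomorphisms, whose morphisms go contravariantly on instances) of (X, ⊨) and the extent classification (℘Y^⊢, ∋), where ℘Y^⊢ is the set of subsets of Y satisfying every sequent in ⊢. That is: given any Y-classification (X', ⊨') with Y-fiber infomorphisms g_X : X' → X from (X, ⊨) and g_⊢ : X' → ℘Y^⊢ from (℘Y^⊢, ∋), there is a unique Y-fiber infomorphism h : X' → X^⊢ from (X^⊢, ⊨) such that h composed with the inclusion equals g_X and h composed with τ equals g_⊢. -/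
import Mathlib

/-- For a `Y`-logic `(X, r, T)`, the classification of normal instances
`(X^⊢, r)` with the inclusion and the restricted state description is a binary
coproduct (in the fiber category of `Y`-classifications, whose morphism from
`A` to `B` is a function on instances `B → A` satisfying the infomorphism
condition) of `(X, r)` and the extent classification `(℘Y^⊢, ∋)`. -/
theorem normal_instances_coproduct {Y X X' : Type*}
    (r : X → Y → Prop) (T : Set (Set Y × Set Y))
    (r' : X' → Y → Prop)
    (gX : X' → X) (hgX : ∀ (x' : X') (y : Y), r (gX x') y ↔ r' x' y)
    (gT : X' → {S : Set Y // ∀ s ∈ T, s.1 ⊆ S → (S ∩ s.2).Nonempty})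
    (hgT : ∀ (x' : X') (y : Y), y ∈ (gT x').val ↔ r' x' y) :
    ∃! h : X' → {x : X // ∀ s ∈ T, (∀ y ∈ s.1, r x y) → ∃ y ∈ s.2, r x y},
      (∀ (x' : X') (y : Y), r (h x').val y ↔ r' x' y) ∧
      (∀ x' : X', (h x').val = gX x') ∧
      (∀ x' : X', (gT x').val = {y : Y | r (h x').val y}) := by
  refine ⟨fun x' => ⟨gX x', ?_⟩, ⟨fun x' y => hgX x' y, fun _ => rfl, ?_⟩, ?_⟩
  · intro s hs hsub
    obtain ⟨y, hy1, hy2⟩ := (gT x').2 s hs (fun y hy =>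
      (hgT x' y).2 ((hgX x' y).1 (hsub y hy)))
    exact ⟨y, hy2, (hgX x' y).2 ((hgT x' y).1 hy1)⟩
  · intro x'
    ext y
    simp [hgT x' y, hgX x' y]
  · intro h ⟨_, h2, _⟩
    funext x'
    exact Subtype.ext (h2 x')
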